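/- Let n ≥ 2, 1 ≤ ℓ ≤ n−1, and let x₁ ≤ ... ≤ xₙ be reals. Let Y₁,...,Yₙ be independent square-integrable random variables with E(Yᵢ) = Φ(xᵢ), where Φ : ℝ → ℝ is bounded by M and Lipschitz with constant L. Then |E((1/(n−ℓ))·Σ_{i=1}^{n−ℓ} YᵢY_{i+ℓ}) − (1/n)·Σ_{i=1}^n Φ(xᵢ)²| ≤ (ℓ/(n−ℓ))·(L·M·(xₙ−x₁) + 2M²). -/

import Mathlib

open MeasureTheory ProbabilityTheory

theorem stmt_13 {Ω : Type*} [MeasurableSpace Ω] {μ : Measure Ω} [IsProbabilityMeasure μ]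
    (n ℓ : ℕ) (hn : 2 ≤ n) (hℓ1 : 1 ≤ ℓ) (hℓn : ℓ ≤ n - 1)
    (x : ℕ → ℝ) (hmono : ∀ i j, 1 ≤ i → i ≤ j → j ≤ n → x i ≤ x j)
    (Y : ℕ → Ω → ℝ) (hmeas : ∀ i, Measurable (Y i))
    (hindep : iIndepFun Y μ)
    (hL : ∀ i, MemLp (Y i) 2 μ)
    (Φ : ℝ → ℝ) (M L : ℝ)
    (hbdd : ∀ t, |Φ t| ≤ M) (hlip : ∀ t s, |Φ t - Φ s| ≤ L * |t - s|)
    (hmean : ∀ i, 1 ≤ i → i ≤ n → (∫ ω, Y i ω ∂μ) = Φ (x i)) :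
    |(∫ ω, (1 / ((n : ℝ) - ℓ)) * ∑ i ∈ Finset.Icc 1 (n - ℓ), Y i ω * Y (i + ℓ) ω ∂μ) -
        (1 / (n : ℝ)) * ∑ i ∈ Finset.Icc 1 n, (Φ (x i)) ^ 2| ≤
      ((ℓ : ℝ) / ((n : ℝ) - ℓ)) * (L * M * (x n - x 1) + 2 * M ^ 2) := by
  have hlt : ℓ < n := by omega
  set N := n - ℓ with hNdef
  have hN1 : 1 ≤ N := by omega
  have hNl : N + ℓ = n := by omega
  have hNcast : ((N : ℝ)) = (n : ℝ) - ℓ := by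
    rw [hNdef, Nat.cast_sub hlt.le]
  have hM : 0 ≤ M := le_trans (abs_nonneg _) (hbdd 0)
  have hL0 : 0 ≤ L := by
    have h := hlip 0 1
    rw [show |(0:ℝ) - 1| = 1 by norm_num, mul_one] at h
    exact le_trans (abs_nonneg _) h
  have hNpos : (0:ℝ) < N := by exact_mod_cast hN1
  have hnpos : (0:ℝ) < n := by positivity
  have hl1 : (1:ℝ) ≤ ℓ := by exact_mod_cast hℓ1
  have hNlen : ((N:ℝ)) ≤ n := by rw [hNcast]; linarith
  -- Step 1: compute the integral
  have hint : ∀ i : ℕ, Integrable (fun ω => Y i ω * Y (i + ℓ) ω) μ := by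
    intro i
    have h := (hL (i + ℓ)).smul (hL i) (p := 2) (q := 2) (r := 1)
    exact memLp_one_iff_integrable.mp h
  have hEprod : ∀ i ∈ Finset.Icc 1 N,
      (∫ ω, Y i ω * Y (i + ℓ) ω ∂μ) = Φ (x i) * Φ (x (i + ℓ)) := by
    intro i hi
    rw [Finset.mem_Icc] at hi
    have hne : i ≠ i + ℓ := by omega
    have h := IndepFun.integral_mul_eq_mul_integral (hindep.indepFun hne) (hL i).aestronglyMeasurable
      (hL (i + ℓ)).aestronglyMeasurable
    have h' : (∫ ω, Y i ω * Y (i + ℓ) ω ∂μ)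
        = (∫ ω, Y i ω ∂μ) * (∫ ω, Y (i + ℓ) ω ∂μ) := h
    rw [h', hmean i hi.1 (by omega), hmean (i + ℓ) (by omega) (by omega)]
  have hI : (∫ ω, (1 / ((n : ℝ) - ℓ)) * ∑ i ∈ Finset.Icc 1 N, Y i ω * Y (i + ℓ) ω ∂μ)
      = (1 / ((n : ℝ) - ℓ)) * ∑ i ∈ Finset.Icc 1 N, Φ (x i) * Φ (x (i + ℓ)) := by
    rw [integral_const_mul, integral_finset_sum _ (fun i _ => hint i)]
    congr 1
    exact Finset.sum_congr rfl hEprod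
  rw [hI, ← hNcast]
  -- Step 2: deterministic bound
  set S1 := ∑ i ∈ Finset.Icc 1 N, Φ (x i) * Φ (x (i + ℓ)) with hS1def
  set S2 := ∑ i ∈ Finset.Icc 1 N, (Φ (x i)) ^ 2 with hS2def
  set S3 := ∑ i ∈ Finset.Icc 1 n, (Φ (x i)) ^ 2 with hS3def
  set R := ∑ i ∈ Finset.Ioc N n, (Φ (x i)) ^ 2 with hRdef
  set dx := x n - x 1 with hdx
  have hdx0 : 0 ≤ dx := by
    have := hmono 1 n le_rfl (by omega) le_rfl
    simp [hdx]; linarith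
  have hIccIoc : ∀ k : ℕ, Finset.Icc 1 k = Finset.Ioc 0 k := by
    intro k; ext i; simp [Nat.lt_iff_add_one_le]
  -- telescoping bound on T
  have hT : ∑ i ∈ Finset.Icc 1 N, (x (i + ℓ) - x i) ≤ ℓ * dx := by
    have hshift : ∑ i ∈ Finset.Icc 1 N, x (i + ℓ) = ∑ j ∈ Finset.Icc (1 + ℓ) n, x j := by
      rw [← hNl, ← Finset.map_add_right_Icc, Finset.sum_map]
      rfl
    have e1 : (∑ i ∈ Finset.Ioc 0 ℓ, x i) + ∑ i ∈ Finset.Ioc ℓ n, x i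
        = ∑ i ∈ Finset.Ioc 0 n, x i :=
      Finset.sum_Ioc_consecutive _ (by omega) (by omega)
    have e2 : (∑ i ∈ Finset.Ioc 0 N, x i) + ∑ i ∈ Finset.Ioc N n, x i
        = ∑ i ∈ Finset.Ioc 0 n, x i :=
      Finset.sum_Ioc_consecutive _ (by omega) (by omega)
    have hub : ∑ i ∈ Finset.Ioc N n, x i ≤ (ℓ : ℝ) * x n := by
      have := Finset.sum_le_card_nsmul (Finset.Ioc N n) x (x n)
        (fun i hi => by
          rw [Finset.mem_Ioc] at hi
          exact hmono i n (by omega) hi.2 le_rfl)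
      rwa [Nat.card_Ioc, show n - N = ℓ by omega, nsmul_eq_mul] at this
    have hlb : (ℓ : ℝ) * x 1 ≤ ∑ i ∈ Finset.Ioc 0 ℓ, x i := by
      have := Finset.card_nsmul_le_sum (Finset.Ioc 0 ℓ) x (x 1)
        (fun i hi => by
          rw [Finset.mem_Ioc] at hi
          exact hmono 1 i le_rfl (by omega) (by omega))
      rwa [Nat.card_Ioc, Nat.sub_zero, nsmul_eq_mul] at this
    rw [Finset.sum_sub_distrib, hshift, show 1 + ℓ = ℓ + 1 by omega,
      Finset.Icc_add_one_left_eq_Ioc, hIccIoc N]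
    simp only [hdx]
    linarith
  -- bound |S1 - S2|
  have hkey1 : |S1 - S2| ≤ L * M * (ℓ * dx) := by
    have h1 : |S1 - S2| ≤ ∑ i ∈ Finset.Icc 1 N, |Φ (x i) * Φ (x (i + ℓ)) - (Φ (x i)) ^ 2| := by
      rw [hS1def, hS2def, ← Finset.sum_sub_distrib]
      exact Finset.abs_sum_le_sum_abs _ _
    have h2 : ∀ i ∈ Finset.Icc 1 N,
        |Φ (x i) * Φ (x (i + ℓ)) - (Φ (x i)) ^ 2| ≤ M * (L * (x (i + ℓ) - x i)) := by
      intro i hi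
      rw [Finset.mem_Icc] at hi
      have e : Φ (x i) * Φ (x (i + ℓ)) - (Φ (x i)) ^ 2 = Φ (x i) * (Φ (x (i + ℓ)) - Φ (x i)) := by
        ring
      rw [e, abs_mul]
      have hx : x i ≤ x (i + ℓ) := hmono i (i + ℓ) (by omega) (by omega) (by omega)
      have hl2 : |Φ (x (i + ℓ)) - Φ (x i)| ≤ L * (x (i + ℓ) - x i) := by
        have := hlip (x (i + ℓ)) (x i)
        rwa [abs_of_nonneg (show (0:ℝ) ≤ x (i + ℓ) - x i by linarith)] at this
      exact mul_le_mul (hbdd _) hl2 (abs_nonneg _) hM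
    calc |S1 - S2| ≤ ∑ i ∈ Finset.Icc 1 N, M * (L * (x (i + ℓ) - x i)) :=
          h1.trans (Finset.sum_le_sum h2)
      _ = M * L * ∑ i ∈ Finset.Icc 1 N, (x (i + ℓ) - x i) := by
          rw [Finset.mul_sum]
          exact Finset.sum_congr rfl fun i _ => by ring
      _ ≤ M * L * (ℓ * dx) := by
          apply mul_le_mul_of_nonneg_left hT (by positivity)
      _ = L * M * (ℓ * dx) := by ring
  -- bounds on S2 and R
  have hsq : ∀ i, (Φ (x i)) ^ 2 ≤ M ^ 2 := by
    intro i
    have := hbdd (x i)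
    nlinarith [abs_nonneg (Φ (x i)), sq_abs (Φ (x i))]
  have hS2ub : S2 ≤ (N : ℝ) * M ^ 2 := by
    have := Finset.sum_le_card_nsmul (Finset.Icc 1 N) (fun i => (Φ (x i)) ^ 2) (M ^ 2)
      (fun i _ => hsq i)
    rwa [Nat.card_Icc, show N + 1 - 1 = N by omega, nsmul_eq_mul] at this
  have hS2lb : 0 ≤ S2 := Finset.sum_nonneg fun i _ => sq_nonneg _
  have hRub : R ≤ (ℓ : ℝ) * M ^ 2 := by
    have := Finset.sum_le_card_nsmul (Finset.Ioc N n) (fun i => (Φ (x i)) ^ 2) (M ^ 2)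
      (fun i _ => hsq i)
    rwa [Nat.card_Ioc, show n - N = ℓ by omega, nsmul_eq_mul] at this
  have hRlb : 0 ≤ R := Finset.sum_nonneg fun i _ => sq_nonneg _
  have hS3 : S3 = S2 + R := by
    rw [hS3def, hS2def, hRdef, hIccIoc, hIccIoc]
    exact (Finset.sum_Ioc_consecutive _ (by omega) (by omega)).symm
  -- final combination
  rw [abs_le] at hkey1 ⊢
  have huv : 1 / (N : ℝ) - 1 / (n : ℝ) = (ℓ : ℝ) * (1 / N) * (1 / n) := by
    field_simp
    rw [hNcast]; ring
  have hvu : 1 / (n : ℝ) ≤ 1 / (N : ℝ) := one_div_le_one_div_of_le hNpos hNlen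
  have hu0 : 0 < 1 / (N : ℝ) := by positivity
  have hv0 : 0 < 1 / (n : ℝ) := by positivity
  have h1 : (1 / (N : ℝ)) * (S1 - S2) ≤ (1 / N) * (L * M * (ℓ * dx)) :=
    mul_le_mul_of_nonneg_left hkey1.2 hu0.le
  have h1' : (1 / (N : ℝ)) * (-(L * M * (ℓ * dx))) ≤ (1 / N) * (S1 - S2) :=
    mul_le_mul_of_nonneg_left hkey1.1 hu0.le
  have h2 : ((ℓ : ℝ) * (1 / N) * (1 / n)) * S2 ≤ ((ℓ : ℝ) * (1 / N) * (1 / n)) * ((N : ℝ) * M ^ 2) :=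
    mul_le_mul_of_nonneg_left hS2ub (by positivity)
  have h2' : 0 ≤ ((ℓ : ℝ) * (1 / N) * (1 / n)) * S2 :=
    mul_nonneg (by positivity) hS2lb
  have he2 : ((ℓ : ℝ) * (1 / N) * (1 / n)) * ((N : ℝ) * M ^ 2) = (ℓ : ℝ) * M ^ 2 * (1 / n) := by
    field_simp
  have h3 : (1 / (n : ℝ)) * R ≤ (1 / n) * ((ℓ : ℝ) * M ^ 2) :=
    mul_le_mul_of_nonneg_left hRub hv0.le
  have h3' : 0 ≤ (1 / (n : ℝ)) * R := mul_nonneg hv0.le hRlb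
  have hsq0 : 0 ≤ (ℓ : ℝ) * M ^ 2 := by positivity
  have hvu2 : (ℓ : ℝ) * M ^ 2 * (1 / n) ≤ (ℓ : ℝ) * M ^ 2 * (1 / N) :=
    mul_le_mul_of_nonneg_left hvu hsq0
  have hdecomp : (1 / (N : ℝ)) * S1 - (1 / n) * S3
      = (1 / N) * (S1 - S2) + ((ℓ : ℝ) * (1 / N) * (1 / n)) * S2 - (1 / n) * R := by
    rw [hS3, ← huv]; ring
  constructor
  · rw [hdecomp]
    have : -((ℓ : ℝ) / N * (L * M * dx + 2 * M ^ 2))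
        = (1 / N) * (-(L * M * (ℓ * dx))) + 0 - ((ℓ : ℝ) * M ^ 2 * (1 / N))
          - ((ℓ : ℝ) * M ^ 2 * (1 / N)) := by
      field_simp; ring
    rw [this]
    have h3'' : (1 / (n : ℝ)) * R ≤ (ℓ : ℝ) * M ^ 2 * (1 / N) := by
      calc (1 / (n : ℝ)) * R ≤ (1 / n) * ((ℓ : ℝ) * M ^ 2) := h3
        _ = (ℓ : ℝ) * M ^ 2 * (1 / n) := by ring
        _ ≤ (ℓ : ℝ) * M ^ 2 * (1 / N) := hvu2
    have hz : (0:ℝ) ≤ (ℓ : ℝ) * M ^ 2 * (1 / N) := by positivity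
    linarith
  · rw [hdecomp]
    have : ((ℓ : ℝ) / N) * (L * M * dx + 2 * M ^ 2)
        = (1 / N) * (L * M * (ℓ * dx)) + ((ℓ : ℝ) * M ^ 2 * (1 / N))
          + ((ℓ : ℝ) * M ^ 2 * (1 / N)) := by
      field_simp; ring
    rw [this]
    have h2'' : ((ℓ : ℝ) * (1 / N) * (1 / n)) * S2 ≤ (ℓ : ℝ) * M ^ 2 * (1 / N) := by
      calc ((ℓ : ℝ) * (1 / N) * (1 / n)) * S2
          ≤ ((ℓ : ℝ) * (1 / N) * (1 / n)) * ((N : ℝ) * M ^ 2) := h2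
        _ = (ℓ : ℝ) * M ^ 2 * (1 / n) := he2
        _ ≤ (ℓ : ℝ) * M ^ 2 * (1 / N) := hvu2
    have hz : (0:ℝ) ≤ (ℓ : ℝ) * M ^ 2 * (1 / N) := by positivity
    linarith
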